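/- arXiv:2406.19836 — 10 statements merged into one kernel-verified Lean document; each statement's English description precedes it below -/
import Mathlib

section
/- For every natural number l ≥ 1, the probability distribution on ℕ obtained by first drawing b uniformly from {0,…,2^l − 1} and then, if b ≥ 2, drawing uniformly from the level of b (i.e. returning 2^d + i with d = Nat.log 2 b and i drawn uniformly from {0,…,2^d − 1}), and returning b itself if b < 2, is the uniform distribution on {0,…,2^l − 1}: every j < 2^l has probability 2^(−l). In other words, relocating a uniform bucket within its level preserves uniformity over the whole tree. -/
/-- Drawing `b` uniformly from `{0,…,2^l − 1}` and then relocating it uniformly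
within its level (returning `b` itself if `b < 2`, and otherwise `2^d + i` with
`d = Nat.log 2 b` and `i` uniform on `{0,…,2^d − 1}`) yields the uniform
distribution on `{0,…,2^l − 1}`: every `j < 2^l` has probability `2^(−l)`. -/
theorem relocate_uniform_preserves_uniform (l : ℕ) (hl : 1 ≤ l) :
    ∀ j : ℕ, j < 2 ^ l →
      ((PMF.uniformOfFintype (Fin (2 ^ l))).bind fun b =>
        if (b : ℕ) < 2 then PMF.pure (b : ℕ)
        else (PMF.uniformOfFintype (Fin (2 ^ Nat.log 2 (b : ℕ)))).bind fun i =>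
          PMF.pure (2 ^ Nat.log 2 (b : ℕ) + (i : ℕ))) j
        = ((2 : ENNReal) ^ l)⁻¹ := by
  intro j hj
  rw [PMF.bind_apply, tsum_fintype]
  simp only [apply_ite (fun p : PMF ℕ => p j), PMF.uniformOfFintype_apply, Fintype.card_fin,
    PMF.pure_apply, PMF.bind_apply, tsum_fintype]
  by_cases hj2 : j < 2
  · -- only b = j contributes
    rw [Finset.sum_eq_single (⟨j, hj⟩ : Fin (2 ^ l))]
    · rw [if_pos (show ((⟨j, hj⟩ : Fin (2 ^ l)) : ℕ) < 2 from hj2), if_pos rfl, mul_one]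
      simp
    · intro b _ hb
      by_cases hb2 : (b : ℕ) < 2
      · rw [if_pos hb2, if_neg, mul_zero]
        intro he
        exact hb (Fin.ext he.symm)
      · rw [if_neg hb2]
        refine mul_eq_zero_of_right _ (Finset.sum_eq_zero fun a _ => ?_)
        rw [if_neg, mul_zero]
        intro he
        have h2b : 2 ≤ (b : ℕ) := by omega
        have hlog : 1 ≤ Nat.log 2 (b : ℕ) := Nat.log_pos (by norm_num) h2b
        have : 2 ^ 1 ≤ 2 ^ Nat.log 2 (b : ℕ) := Nat.pow_le_pow_right (by norm_num) hlog
        omega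
    · simp
  · -- j ≥ 2
    have hjle : 2 ^ Nat.log 2 j ≤ j := Nat.pow_log_le_self 2 (by omega)
    have hjlt : j < 2 ^ (Nat.log 2 j + 1) := Nat.lt_pow_succ_log_self (by norm_num) j
    have he1 : 1 ≤ Nat.log 2 j := Nat.log_pos (by norm_num) (by omega)
    have hel : Nat.log 2 j < l := by
      by_contra h
      have : 2 ^ l ≤ 2 ^ Nat.log 2 j := Nat.pow_le_pow_right (by norm_num) (by omega)
      omega
    trans (∑ b : Fin (2 ^ l), ((2 ^ l : ℕ) : ENNReal)⁻¹ *
        (if 2 ^ Nat.log 2 j ≤ (b : ℕ) ∧ (b : ℕ) < 2 ^ (Nat.log 2 j + 1)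
          then (((2 ^ Nat.log 2 j : ℕ)) : ENNReal)⁻¹ else 0))
    · refine Finset.sum_congr rfl fun b _ => ?_
      congr 1
      by_cases hb2 : (b : ℕ) < 2
      · rw [if_pos hb2, if_neg (show j ≠ (b : ℕ) by omega), if_neg]
        rintro ⟨h1, -⟩
        have : 2 ^ 1 ≤ 2 ^ Nat.log 2 j := Nat.pow_le_pow_right (by norm_num) he1
        omega
      · rw [if_neg hb2]
        have h2b : 2 ≤ (b : ℕ) := by omega
        have hble : 2 ^ Nat.log 2 (b : ℕ) ≤ (b : ℕ) := Nat.pow_log_le_self 2 (by omega)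
        have hblt : (b : ℕ) < 2 ^ (Nat.log 2 (b : ℕ) + 1) :=
          Nat.lt_pow_succ_log_self (by norm_num) _
        by_cases hP : 2 ^ Nat.log 2 j ≤ (b : ℕ) ∧ (b : ℕ) < 2 ^ (Nat.log 2 j + 1)
        · rw [if_pos hP]
          have hde : Nat.log 2 (b : ℕ) = Nat.log 2 j :=
            Nat.log_eq_of_pow_le_of_lt_pow hP.1 hP.2
          rw [hde]
          have hsplit : 2 ^ (Nat.log 2 j + 1) = 2 ^ Nat.log 2 j + 2 ^ Nat.log 2 j := by ring
          have hd : j - 2 ^ Nat.log 2 j < 2 ^ Nat.log 2 j := by omega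
          rw [Finset.sum_eq_single (⟨j - 2 ^ Nat.log 2 j, hd⟩ : Fin (2 ^ Nat.log 2 j))]
          · rw [if_pos (by show j = 2 ^ Nat.log 2 j + (j - 2 ^ Nat.log 2 j); omega), mul_one]
          · intro a _ ha
            rw [if_neg, mul_zero]
            intro he
            apply ha
            apply Fin.ext
            show (a : ℕ) = j - 2 ^ Nat.log 2 j
            omega
          · simp
        · rw [if_neg hP]
          refine Finset.sum_eq_zero fun a _ => ?_
          rw [if_neg, mul_zero]
          intro he
          have hsplit : 2 ^ (Nat.log 2 (b : ℕ) + 1)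
              = 2 ^ Nat.log 2 (b : ℕ) + 2 ^ Nat.log 2 (b : ℕ) := by ring
          have hai := a.isLt
          have hde : Nat.log 2 j = Nat.log 2 (b : ℕ) :=
            Nat.log_eq_of_pow_le_of_lt_pow (by omega) (by omega)
          rw [hde] at hP
          exact hP ⟨hble, hblt⟩
    · rw [← Finset.mul_sum]
      rw [Fin.sum_univ_eq_sum_range (fun i =>
        if 2 ^ Nat.log 2 j ≤ i ∧ i < 2 ^ (Nat.log 2 j + 1)
          then (((2 ^ Nat.log 2 j : ℕ)) : ENNReal)⁻¹ else 0) (2 ^ l)]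
      have hfil : (Finset.range (2 ^ l)).filter
          (fun i => 2 ^ Nat.log 2 j ≤ i ∧ i < 2 ^ (Nat.log 2 j + 1))
          = Finset.Ico (2 ^ Nat.log 2 j) (2 ^ (Nat.log 2 j + 1)) := by
        ext i
        simp only [Finset.mem_filter, Finset.mem_range, Finset.mem_Ico]
        have : 2 ^ (Nat.log 2 j + 1) ≤ 2 ^ l := Nat.pow_le_pow_right (by norm_num) (by omega)
        omega
      rw [← Finset.sum_filter, hfil, Finset.sum_const, Nat.card_Ico]
      have hc : 2 ^ (Nat.log 2 j + 1) - 2 ^ Nat.log 2 j = 2 ^ Nat.log 2 j := by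
        have : 2 ^ (Nat.log 2 j + 1) = 2 ^ Nat.log 2 j + 2 ^ Nat.log 2 j := by ring
        omega
      rw [hc, nsmul_eq_mul, ENNReal.mul_inv_cancel (by positivity) (by simp), mul_one]
      simp
end

section
/- For every n ≥ 1, every ω ≥ 1, every hash sequence h : ℕ → ℕ and every seeded hash H : ℕ → ℕ → ℕ, the BinomialHash lookup satisfies 0 ≤ lookup(n, h, H) < n; i.e. it always returns a valid bucket. -/
/-- Relocation within a level: `reloc H b x = b` if `b < 2`, otherwise
`2^d + (H x (2^d − 1)) % 2^d` with `d = Nat.log 2 b`. -/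
def reloc (H : ℕ → ℕ → ℕ) (b x : ℕ) : ℕ :=
  if b < 2 then b
  else 2 ^ Nat.log 2 b + (H x (2 ^ Nat.log 2 b - 1)) % 2 ^ Nat.log 2 b

/-- The main loop of BinomialHash: starting at iteration `i` with `fuel`
remaining iterations, compute `c = reloc(h i % E, h i)`; if `c < M` fall back to
the minor tree, if `c < n` return `c`, otherwise continue; after the last
iteration fall back to the minor tree. -/
def binLoop (H : ℕ → ℕ → ℕ) (n M E : ℕ) (h : ℕ → ℕ) : ℕ → ℕ → ℕ
  | _, 0 => reloc H (h 0 % M) (h 0)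
  | i, fuel + 1 =>
      let c := reloc H (h i % E) (h i)
      if c < M then reloc H (h 0 % M) (h 0)
      else if c < n then c
      else binLoop H n M E h (i + 1) fuel

/-- The BinomialHash lookup with at most `ω` loop iterations: returns `0` when
`n = 1`, and otherwise runs the loop with `E = 2^l`, `M = 2^(l-1)`,
`l = Nat.clog 2 n`. -/
def binomialLookup (ω n : ℕ) (h : ℕ → ℕ) (H : ℕ → ℕ → ℕ) : ℕ :=
  if n = 1 then 0
  else binLoop H n (2 ^ (Nat.clog 2 n - 1)) (2 ^ Nat.clog 2 n) h 0 ω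

/-!
Every exit of the loop either returns a bucket `c` after testing `c < n`, or falls back to
relocating `h 0 % M` inside the minor tree. Relocation moves a bucket only within its own level
of the tree, so a bucket below `2^k` stays below `2^k`, and the minor tree has capacity
`M = 2^(clog 2 n - 1) < n`.
-/

theorem reloc_lt_two_pow (H : ℕ → ℕ → ℕ) {k b : ℕ} (x : ℕ) (hb : b < 2 ^ k) :
    reloc H b x < 2 ^ k := by
  unfold reloc
  split_ifs with hb2
  · exact hb
  · set d := Nat.log 2 b
    have hdk : d < k :=
      (Nat.pow_lt_pow_iff_right (by norm_num)).mp
        ((Nat.pow_log_le_self 2 (by omega)).trans_lt hb)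
    calc 2 ^ d + H x (2 ^ d - 1) % 2 ^ d
        < 2 ^ d + 2 ^ d := by gcongr; exact Nat.mod_lt _ (by positivity)
      _ = 2 ^ (d + 1) := by ring
      _ ≤ 2 ^ k := Nat.pow_le_pow_right (by norm_num) hdk

theorem binLoop_lt_of_fallback_lt (H : ℕ → ℕ → ℕ) {n M : ℕ} (E : ℕ) (h : ℕ → ℕ)
    (hfallback : reloc H (h 0 % M) (h 0) < n) (i fuel : ℕ) :
    binLoop H n M E h i fuel < n := by
  induction fuel generalizing i with
  | zero => exact hfallback
  | succ fuel ih =>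
    simp only [binLoop]
    split_ifs with _ hcn
    · exact hfallback
    · exact hcn
    · exact ih (i + 1)

theorem binomialLookup_lt_general (ω n : ℕ) (hn : 1 ≤ n)
    (h : ℕ → ℕ) (H : ℕ → ℕ → ℕ) :
    0 ≤ binomialLookup ω n h H ∧ binomialLookup ω n h H < n := by
  refine ⟨Nat.zero_le _, ?_⟩
  unfold binomialLookup
  split_ifs with hn1
  · omega
  · have hminor : 2 ^ (Nat.clog 2 n - 1) < n :=
      Nat.pow_pred_clog_lt_self (by norm_num) (by omega)
    apply binLoop_lt_of_fallback_lt
    exact (reloc_lt_two_pow H _ (Nat.mod_lt _ (by positivity))).trans hminor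

/-- BinomialHash always returns a valid bucket: for every `n ≥ 1` and `ω ≥ 1`,
`0 ≤ lookup(n, h, H) < n`. -/
theorem binomialLookup_lt (ω n : ℕ) (hω : 1 ≤ ω) (hn : 1 ≤ n)
    (h : ℕ → ℕ) (H : ℕ → ℕ → ℕ) :
    0 ≤ binomialLookup ω n h H ∧ binomialLookup ω n h H < n :=
  binomialLookup_lt_general ω n hn h H
end

section
/- BinomialHash is monotone: for every n ≥ 1, every ω ≥ 1, every hash sequence h : ℕ → ℕ and every seeded hash H : ℕ → ℕ → ℕ, lookup(n + 1, h, H) = lookup(n, h, H) or lookup(n + 1, h, H) = n. That is, when a new bucket n is added to a cluster of n buckets, every key either keeps its bucket or moves to the new bucket. -/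
/-!
If `n` is not a power of two, `n` and `n + 1` share the trees `E = 2^l` and `M = 2^(l-1)`, so
the two loops see the same candidates `c` and can only part ways at `c = n`, where the new loop
returns `n`. If `n = 2^l`, the new loop has minor tree `2^l = n`, so it either returns `n` or
falls back to `reloc (h 0 % 2^l)`. For `n ≥ 2` the old loop returns that same bucket at once:
its first candidate `reloc (h 0 % 2^l)` is below `n`, and as `reloc` preserves the depth of a
bucket, the candidate lies in the minor tree exactly when `h 0 % 2^l` does, in which case the
fallback `reloc (h 0 % 2^(l-1))` is the same bucket.
-/

section Reloc

variable (H : ℕ → ℕ → ℕ) (x : ℕ)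

lemma log_reloc (b : ℕ) : Nat.log 2 (reloc H b x) = Nat.log 2 b := by
  unfold reloc
  split_ifs
  · rfl
  · apply Nat.log_eq_of_pow_le_of_lt_pow (Nat.le_add_right _ _)
    have := Nat.mod_lt (H x (2 ^ Nat.log 2 b - 1)) (Nat.two_pow_pos (Nat.log 2 b))
    rw [Nat.pow_succ]
    omega

lemma reloc_lt_two_pow_iff {b k : ℕ} : reloc H b x < 2 ^ k ↔ b < 2 ^ k := by
  by_cases hb : b < 2
  · simp only [reloc, if_pos hb]
  · have hb0 : b ≠ 0 := by omega
    have hr0 : reloc H b x ≠ 0 := by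
      simp only [reloc, if_neg hb]
      positivity
    rw [← Nat.log_lt_iff_lt_pow one_lt_two hr0, ← Nat.log_lt_iff_lt_pow one_lt_two hb0,
      log_reloc]

end Reloc

section Loop

variable (H : ℕ → ℕ → ℕ) (h : ℕ → ℕ)

lemma binLoop_succ_eq_or_eq (n M E i fuel : ℕ) :
    binLoop H (n + 1) M E h i fuel = binLoop H n M E h i fuel ∨
      binLoop H (n + 1) M E h i fuel = n := by
  induction fuel generalizing i with
  | zero => exact .inl rfl
  | succ fuel ih =>
    simp only [binLoop]
    split_ifs
    · exact .inl rfl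
    · exact .inl rfl
    · exact .inr (by omega)
    · omega
    · exact ih (i + 1)

lemma binLoop_succ_minor_eq_or_eq (M E i fuel : ℕ) :
    binLoop H (M + 1) M E h i fuel = reloc H (h 0 % M) (h 0) ∨
      binLoop H (M + 1) M E h i fuel = M := by
  induction fuel generalizing i with
  | zero => exact .inl rfl
  | succ fuel ih =>
    simp only [binLoop]
    split_ifs
    · exact .inl rfl
    · exact .inr (by omega)
    · exact ih (i + 1)

lemma binLoop_two_pow_self {j k : ℕ} (hkj : k ≤ j) (fuel : ℕ) :
    binLoop H (2 ^ j) (2 ^ k) (2 ^ j) h 0 (fuel + 1) = reloc H (h 0 % 2 ^ j) (h 0) := by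
  have hlt : reloc H (h 0 % 2 ^ j) (h 0) < 2 ^ j :=
    (reloc_lt_two_pow_iff H _).mpr (Nat.mod_lt _ (Nat.two_pow_pos j))
  simp only [binLoop]
  split_ifs with hminor
  · rw [reloc_lt_two_pow_iff] at hminor
    rw [← Nat.mod_mod_of_dvd (h 0) (Nat.pow_dvd_pow 2 hkj), Nat.mod_eq_of_lt hminor]
  · rfl

end Loop

section Lookup

variable (ω : ℕ) (h : ℕ → ℕ) (H : ℕ → ℕ → ℕ)

lemma binomialLookup_succ_of_two_pow_clog_ne {n : ℕ} (hn : 2 ^ Nat.clog 2 n ≠ n) :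
    binomialLookup ω (n + 1) h H = binomialLookup ω n h H ∨
      binomialLookup ω (n + 1) h H = n := by
  rcases Nat.eq_zero_or_pos n with rfl | hn0
  · exact .inr rfl
  have hn1 : n ≠ 1 := by
    rintro rfl
    exact hn rfl
  rw [binomialLookup, binomialLookup, if_neg (by omega), if_neg hn1,
    ← (Nat.clog_eq_clog_succ_iff one_lt_two).mpr hn]
  exact binLoop_succ_eq_or_eq H h n _ _ 0 ω

lemma binomialLookup_two_pow_succ (hω : 1 ≤ ω) (l : ℕ) :
    binomialLookup ω (2 ^ l + 1) h H = binomialLookup ω (2 ^ l) h H ∨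
      binomialLookup ω (2 ^ l + 1) h H = 2 ^ l := by
  have hclog : Nat.clog 2 (2 ^ l + 1) = l + 1 :=
    le_antisymm
      (Nat.clog_le_of_le_pow (by rw [Nat.pow_succ, Nat.mul_two]; simp [Nat.one_le_two_pow]))
      ((Nat.lt_clog_iff_pow_lt one_lt_two).mpr (Nat.lt_succ_self _))
  have hnew : binomialLookup ω (2 ^ l + 1) h H =
      binLoop H (2 ^ l + 1) (2 ^ l) (2 ^ (l + 1)) h 0 ω := by
    rw [binomialLookup, if_neg (by simp), hclog, Nat.add_sub_cancel]
  rw [hnew]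
  refine (binLoop_succ_minor_eq_or_eq H h _ _ 0 ω).imp_left fun hfallback => hfallback.trans ?_
  obtain ⟨fuel, rfl⟩ := Nat.exists_eq_add_of_le' hω
  rcases l with _ | l
  · simp [binomialLookup, reloc, Nat.mod_one]
  · rw [binomialLookup, if_neg (Nat.one_lt_two_pow (Nat.succ_ne_zero l)).ne',
      Nat.clog_pow _ _ one_lt_two, Nat.add_sub_cancel, binLoop_two_pow_self H h (Nat.le_succ l)]

end Lookup

theorem binomialLookup_monotone_general (ω n : ℕ) (hω : 1 ≤ ω)
    (h : ℕ → ℕ) (H : ℕ → ℕ → ℕ) :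
    binomialLookup ω (n + 1) h H = binomialLookup ω n h H ∨
    binomialLookup ω (n + 1) h H = n := by
  by_cases hpow : 2 ^ Nat.clog 2 n = n
  · obtain ⟨l, rfl⟩ : ∃ l, n = 2 ^ l := ⟨_, hpow.symm⟩
    exact binomialLookup_two_pow_succ ω h H hω l
  · exact binomialLookup_succ_of_two_pow_clog_ne ω h H hpow

/-- BinomialHash is monotone: when a new bucket `n` is added to a cluster of
`n` buckets, every key either keeps its bucket or moves to the new bucket `n`. -/
theorem binomialLookup_monotone (ω n : ℕ) (hω : 1 ≤ ω) (hn : 1 ≤ n)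
    (h : ℕ → ℕ) (H : ℕ → ℕ → ℕ) :
    binomialLookup ω (n + 1) h H = binomialLookup ω n h H ∨
    binomialLookup ω (n + 1) h H = n :=
  binomialLookup_monotone_general ω n hω h H
end

section
/- Let M ≥ 1, E = 2M and n be natural numbers with M < n ≤ E, and let ω ≥ 1. For X drawn from the uniform distribution on the space Fin ω → Fin E (ω independent uniform draws from {0,…,E−1}), the probability of the event that some draw is smaller than n and the first such draw lies in [M, n) equals ((n − M)/n) · (1 − ((E − n)/E)^ω). This is the probability that BinomialHash assigns a key to a bucket of the lowest (partially filled) level of the tree. -/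
/-!
Condition on the first draw: it lies in `T` (the event occurs), in `S \ T` (it fails), or
outside `S` (the remaining draws decide). Writing `c ω` for the number of favourable tuples,
this gives `c (ω + 1) = |T| |α|^ω + |Sᶜ| c ω`, whose solution is characterised without
subtraction by `c ω |S| + |T| |Sᶜ|^ω = |T| |α|^ω`; dividing by `|α|^ω` gives the formula.
-/

open Finset
open scoped ENNReal

theorem ENNReal.natCast_div_pow_of_mul_add_mul_pow {f t s q ω : ℕ} (hs : s ≠ 0)
    (h : f * s + t * q ^ ω = t * (s + q) ^ ω) :
    (f : ℝ≥0∞) / ((s + q) ^ ω : ℕ) = t / s * (1 - ((q : ℝ≥0∞) / (s + q : ℕ)) ^ ω) := by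
  have hA : (((s + q) ^ ω : ℕ) : ℝ≥0∞) ≠ 0 := by simp; omega
  have hD : t * ((s + q) ^ ω - q ^ ω) = f * s := by
    rw [Nat.mul_sub]; omega
  symm
  calc (t : ℝ≥0∞) / s * (1 - ((q : ℝ≥0∞) / (s + q : ℕ)) ^ ω)
      = t * ((((s + q) ^ ω : ℕ) : ℝ≥0∞) - (q ^ ω : ℕ)) * (s : ℝ≥0∞)⁻¹ *
          (((s + q) ^ ω : ℕ) : ℝ≥0∞)⁻¹ := by
        rw [div_eq_mul_inv, div_eq_mul_inv, mul_pow, ← ENNReal.inv_pow, ← Nat.cast_pow,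
          ← Nat.cast_pow, ← ENNReal.mul_inv_cancel hA (by simp),
          ← ENNReal.sub_mul fun _ _ => ENNReal.inv_ne_top.2 hA]
        ring
    _ = f / ((s + q) ^ ω : ℕ) := by
        rw [← ENNReal.natCast_sub, ← Nat.cast_mul, hD, Nat.cast_mul, mul_assoc (f : ℝ≥0∞),
          ENNReal.mul_inv_cancel (by simpa) (by simp), mul_one, div_eq_mul_inv]

section

variable {α : Type*} [Fintype α] [DecidableEq α]

def firstHitIn (S T : Finset α) (ω : ℕ) : Finset (Fin ω → α) :=
  {X | ∃ i, X i ∈ T ∧ ∀ j < i, X j ∉ S}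

variable {S T : Finset α}

theorem cons_mem_firstHitIn_succ {ω : ℕ} (x : α) (Y : Fin ω → α) :
    Fin.cons x Y ∈ firstHitIn S T (ω + 1) ↔ x ∈ T ∨ x ∉ S ∧ Y ∈ firstHitIn S T ω := by
  simp only [firstHitIn, mem_filter, mem_univ, true_and, Fin.exists_fin_succ, Fin.cons_zero,
    Fin.cons_succ, Fin.forall_fin_succ, Fin.succ_lt_succ_iff, Fin.not_lt_zero, Fin.succ_pos]
  grind

theorem card_firstHitIn_succ (hTS : T ⊆ S) (ω : ℕ) :
    #(firstHitIn S T (ω + 1)) = #T * Fintype.card α ^ ω + #Sᶜ * #(firstHitIn S T ω) := by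
  have hsplit : firstHitIn S T (ω + 1) =
      (T ×ˢ univ ∪ Sᶜ ×ˢ firstHitIn S T ω).map (Fin.consEquiv fun _ => α).toEmbedding := by
    ext X
    rw [mem_map_equiv, ← Fin.cons_self_tail X, cons_mem_firstHitIn_succ]
    simp [Fin.consEquiv]
  have hdisj : Disjoint (T ×ˢ (univ : Finset (Fin ω → α))) (Sᶜ ×ˢ firstHitIn S T ω) :=
    disjoint_product.mpr (Or.inl (disjoint_compl_right.mono_left hTS))
  rw [hsplit, card_map, card_union_of_disjoint hdisj, card_product, card_product, card_univ,
    Fintype.card_fun, Fintype.card_fin]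

theorem card_firstHitIn_mul_card_add (hTS : T ⊆ S) (ω : ℕ) :
    #(firstHitIn S T ω) * #S + #T * #Sᶜ ^ ω = #T * Fintype.card α ^ ω := by
  induction ω with
  | zero => simp [firstHitIn]
  | succ ω ih =>
    rw [card_firstHitIn_succ hTS, ← card_add_card_compl S] at *
    linear_combination #Sᶜ * ih

theorem PMF.toMeasure_uniformOfFintype_firstHitIn [Nonempty α] [MeasurableSpace α]
    [MeasurableSingletonClass α] (hTS : T ⊆ S) (hS : S.Nonempty) (ω : ℕ) :
    (uniformOfFintype (Fin ω → α)).toMeasure (firstHitIn S T ω) =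
      #T / #S * (1 - ((#Sᶜ : ℝ≥0∞) / Fintype.card α) ^ ω) := by
  rw [toMeasure_uniformOfFintype_apply _ (firstHitIn S T ω).measurableSet]
  simp only [coe_sort_coe, Fintype.card_coe, Fintype.card_fun, Fintype.card_fin,
    ← card_add_card_compl S]
  exact ENNReal.natCast_div_pow_of_mul_add_mul_pow hS.card_ne_zero
    (by rw [card_add_card_compl]; exact card_firstHitIn_mul_card_add hTS ω)

end

/-- For `X` drawn uniformly from `Fin ω → Fin E` (`ω` independent uniform draws
from `{0,…,E−1}`), the probability that some draw is smaller than `n` and the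
first such draw lies in `[M, n)` equals `((n−M)/n)·(1−((E−n)/E)^ω)`: this is the
probability that BinomialHash assigns a key to the lowest level of the tree. -/
theorem lowest_level_probability (M n E ω : ℕ)
    (hMn : M < n) (hnE : n ≤ E) :
    (@PMF.uniformOfFintype (Fin ω → Fin E) _
        ⟨fun _ => ⟨0, by omega⟩⟩).toMeasure
      {X | ∃ i : Fin ω, (X i : ℕ) < n ∧ (∀ j : Fin ω, j < i → n ≤ (X j : ℕ)) ∧
          M ≤ (X i : ℕ)}
      = (((n - M : ℕ) : ENNReal) / (n : ℕ)) *
          (1 - (((E - n : ℕ) : ENNReal) / (E : ℕ)) ^ ω) := by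
  set S : Finset (Fin E) := {x | (x : ℕ) < n}
  set T : Finset (Fin E) := S \ ({x | (x : ℕ) < M} : Finset (Fin E))
  have hTS : T ⊆ S := sdiff_subset
  have : NeZero E := ⟨by omega⟩
  have hS : #S = n := by simp [S, Fin.card_filter_val_lt, hnE]
  have hT : #T = n - M := by
    have hLS : ({x | (x : ℕ) < M} : Finset (Fin E)) ⊆ S :=
      fun x => by simp only [S, mem_filter, mem_univ, true_and]; omega
    rw [card_sdiff_of_subset hLS, hS, Fin.card_filter_val_lt]
    omega
  have hevent : {X : Fin ω → Fin E | ∃ i, (X i : ℕ) < n ∧ (∀ j, j < i → n ≤ (X j : ℕ)) ∧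
      M ≤ (X i : ℕ)} = firstHitIn S T ω := by
    ext X
    simp only [firstHitIn, S, T, coe_filter, mem_sdiff, mem_filter, mem_univ, true_and, not_lt,
      Set.mem_ofPred_eq]
    exact exists_congr fun i => by tauto
  rw [hevent, PMF.toMeasure_uniformOfFintype_firstHitIn hTS (card_pos.mp (by omega)), hT, hS,
    card_compl, Fintype.card_fin, hS]
end

section
/- Let M ≥ 1, E = 2M and n be natural numbers with M < n ≤ E, let ω ≥ 1, and set q = (E − n)/E. Define PMFs p t on ℕ by: p 0 is the uniform distribution on {0,…,M−1}, and p (t+1) draws c uniformly from {0,…,E−1}, returns c if c < n, and otherwise continues with p t. Then for every bucket j with M ≤ j < n, (p ω)(j) = (1 − q^ω)/n, and for every bucket j with j < M, (p ω)(j) = (1 − q^ω)/n + q^ω/M. In particular all buckets of the lowest level receive equal probability, and all buckets of the minor tree receive equal (slightly larger) probability. -/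
/-- The idealized probabilistic model of the BinomialHash lookup: `binPMF M E n hM hE 0`
is uniform on the minor tree `{0,…,M−1}`, and `binPMF M E n hM hE (t+1)` draws `c`
uniformly from `{0,…,E−1}`, returns `c` if `c < n`, and otherwise continues with
`binPMF M E n hM hE t`. -/
noncomputable def binPMF (M E n : ℕ) (hM : M ≠ 0) (hE : E ≠ 0) : ℕ → PMF ℕ
  | 0 => PMF.uniformOfFinset (Finset.range M) (Finset.nonempty_range_iff.mpr hM)
  | t + 1 =>
      (PMF.uniformOfFinset (Finset.range E) (Finset.nonempty_range_iff.mpr hE)).bind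
        fun c => if c < n then PMF.pure c else binPMF M E n hM hE t

lemma binPMF_succ_apply (M E n : ℕ) (hM : M ≠ 0) (hE : E ≠ 0) (hnE : n ≤ E)
    (t j : ℕ) (hj : j < n) :
    binPMF M E n hM hE (t + 1) j
      = (E : ENNReal)⁻¹
        + ((E - n : ℕ) : ENNReal) / (E : ℕ) * binPMF M E n hM hE t j := by
  have hjE : j < E := lt_of_lt_of_le hj hnE
  show ((PMF.uniformOfFinset (Finset.range E) (Finset.nonempty_range_iff.mpr hE)).bind
      fun c => if c < n then PMF.pure c else binPMF M E n hM hE t) j = _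
  rw [PMF.bind_apply]
  rw [tsum_eq_sum (s := Finset.range E)
    (by intro b hb; simp [PMF.uniformOfFinset_apply, hb])]
  have hterm : ∀ c ∈ Finset.range E,
      (PMF.uniformOfFinset (Finset.range E) (Finset.nonempty_range_iff.mpr hE)) c *
        (if c < n then PMF.pure c else binPMF M E n hM hE t) j
      = (E : ENNReal)⁻¹ *
          (if c < n then (if j = c then 1 else 0) else binPMF M E n hM hE t j) := by
    intro c hc
    rw [PMF.uniformOfFinset_apply, if_pos hc, Finset.card_range]
    by_cases h : c < n <;> simp [h, PMF.pure_apply]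
  rw [Finset.sum_congr rfl hterm]
  rw [Finset.range_eq_Ico, ← Finset.sum_Ico_consecutive _ (Nat.zero_le n) hnE]
  have h1 : ∑ c ∈ Finset.Ico 0 n,
      (E : ENNReal)⁻¹ *
        (if c < n then (if j = c then 1 else 0) else binPMF M E n hM hE t j)
      = (E : ENNReal)⁻¹ := by
    rw [← Finset.range_eq_Ico]
    rw [Finset.sum_congr rfl (fun c hc => by
      rw [if_pos (Finset.mem_range.mp hc)])]
    rw [← Finset.mul_sum, Finset.sum_ite_eq (Finset.range n) j (fun _ => (1:ENNReal))]
    simp [hj]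
  have h2 : ∑ c ∈ Finset.Ico n E,
      (E : ENNReal)⁻¹ *
        (if c < n then (if j = c then 1 else 0) else binPMF M E n hM hE t j)
      = ((E - n : ℕ) : ENNReal) / (E : ℕ) * binPMF M E n hM hE t j := by
    rw [Finset.sum_congr rfl (fun c hc => by
      rw [if_neg (not_lt.mpr (Finset.mem_Ico.mp hc).1)])]
    rw [Finset.sum_const, Nat.card_Ico, nsmul_eq_mul]
    rw [ENNReal.div_eq_inv_mul]
    ring
  rw [h1, h2]

/-- With `q = (E−n)/E`, every bucket `j` of the lowest level (`M ≤ j < n`)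
receives probability `(1 − q^ω)/n`, and every bucket `j` of the minor tree
(`j < M`) receives probability `(1 − q^ω)/n + q^ω/M`. -/
theorem binPMF_balance (M E n ω : ℕ) (hM : 1 ≤ M) (hE : E = 2 * M)
    (hMn : M < n) (hnE : n ≤ E) (hω : 1 ≤ ω) :
    (∀ j : ℕ, M ≤ j → j < n →
      binPMF M E n (by omega) (by omega) ω j
        = (1 - (((E - n : ℕ) : ENNReal) / (E : ℕ)) ^ ω) / (n : ℕ)) ∧
    (∀ j : ℕ, j < M →
      binPMF M E n (by omega) (by omega) ω j
        = (1 - (((E - n : ℕ) : ENNReal) / (E : ℕ)) ^ ω) / (n : ℕ)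
          + (((E - n : ℕ) : ENNReal) / (E : ℕ)) ^ ω / (M : ℕ)) := by
  have hM0 : M ≠ 0 := by omega
  have hE0 : E ≠ 0 := by omega
  have hn0 : n ≠ 0 := by omega
  set q : ENNReal := ((E - n : ℕ) : ENNReal) / (E : ℕ) with hqdef
  have hEtop : (E : ENNReal) ≠ ⊤ := ENNReal.natCast_ne_top E
  have hEne : (E : ENNReal) ≠ 0 := Nat.cast_ne_zero.mpr hE0
  have hntop : (n : ENNReal) ≠ ⊤ := ENNReal.natCast_ne_top n
  have hnne : (n : ENNReal) ≠ 0 := Nat.cast_ne_zero.mpr hn0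
  have hq1 : q ≤ 1 := by
    rw [hqdef, ENNReal.div_le_iff hEne hEtop, one_mul]
    exact_mod_cast Nat.sub_le E n
  have hqtop : q ≠ ⊤ := ne_top_of_le_ne_top ENNReal.one_ne_top hq1
  -- (1 - q)/n = E⁻¹
  have hsub : (1 : ENNReal) - q = (n : ENNReal) / E := by
    apply ENNReal.sub_eq_of_eq_add hqtop
    rw [hqdef, ENNReal.div_add_div_same]
    rw [show ((n : ENNReal) + ((E - n : ℕ) : ENNReal)) = ((E : ℕ) : ENNReal) by
      rw [← Nat.cast_add]; congr 1; omega]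
    rw [ENNReal.div_self hEne hEtop]
  have hEinv : (1 - q) / (n : ℕ) = (E : ENNReal)⁻¹ := by
    rw [hsub, div_eq_mul_inv, div_eq_mul_inv, mul_comm (n:ENNReal), mul_assoc,
      ENNReal.mul_inv_cancel hnne hntop, mul_one]
  have hkey : ∀ (t : ℕ) (x : ENNReal),
      (E : ENNReal)⁻¹ + q * ((1 - q ^ t) / (n : ℕ) + x)
        = (1 - q ^ (t + 1)) / (n : ℕ) + q * x := by
    intro t x
    have hqt1 : q ^ t ≤ 1 := pow_le_one' hq1 t
    have hqs : q ^ (t + 1) ≤ q := by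
      rw [pow_succ']
      calc q * q ^ t ≤ q * 1 := mul_le_mul_right hqt1 q
        _ = q := mul_one q
    have hms : q * (1 - q ^ t) = q - q ^ (t + 1) := by
      rw [ENNReal.mul_sub (fun _ _ => hqtop), mul_one, pow_succ']
    rw [mul_add, ← mul_div_assoc, hms, ← hEinv, ← add_assoc,
      ENNReal.div_add_div_same, tsub_add_tsub_cancel hq1 hqs]
  have main : ∀ t : ℕ,
      (∀ j, M ≤ j → j < n → binPMF M E n hM0 hE0 t j = (1 - q ^ t) / (n : ℕ)) ∧
      (∀ j, j < M → binPMF M E n hM0 hE0 t j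
        = (1 - q ^ t) / (n : ℕ) + q ^ t / (M : ℕ)) := by
    intro t
    induction t with
    | zero =>
      constructor
      · intro j hMj hjn
        show (PMF.uniformOfFinset (Finset.range M)
          (Finset.nonempty_range_iff.mpr hM0)) j = _
        rw [PMF.uniformOfFinset_apply, if_neg (by simp; omega)]
        simp
      · intro j hj
        show (PMF.uniformOfFinset (Finset.range M)
          (Finset.nonempty_range_iff.mpr hM0)) j = _
        rw [PMF.uniformOfFinset_apply, if_pos (Finset.mem_range.mpr hj),
          Finset.card_range]
        simp [ENNReal.div_eq_inv_mul]
    | succ t ih =>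
      constructor
      · intro j hMj hjn
        rw [binPMF_succ_apply M E n hM0 hE0 hnE t j hjn, ih.1 j hMj hjn, ← hqdef]
        have := hkey t 0
        simpa only [mul_zero, add_zero] using this
      · intro j hj
        rw [binPMF_succ_apply M E n hM0 hE0 hnE t j (lt_trans hj hMn),
          ih.2 j hj, ← hqdef, hkey t (q ^ t / (M : ℕ))]
        rw [← mul_div_assoc, ← pow_succ']
  exact ⟨fun j h1 h2 => (main ω).1 j h1 h2, fun j h => (main ω).2 j h⟩
end

section
/- Let ω ≥ 1 be a natural number and let M, n, E, k be real numbers with 0 < M, E = 2M, M < n < E and k > 0. With P = ((n − M)/n)·(1 − ((E − n)/E)^ω), K' = P·k/(n − M) and K = (1 − P)·k/M, one has K' < k/n < K; i.e. the expected load of each lowest-level bucket is strictly below the balanced value k/n, and the expected load of each minor-tree bucket is strictly above it. -/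
/-- The imbalance of BinomialHash is towards the minor tree: with
`P = ((n−M)/n)·(1−((E−n)/E)^ω)`, `K' = P·k/(n−M)` and `K = (1−P)·k/M`, one has
`K' < k/n < K`. -/
theorem imbalance_towards_minor_tree (ω : ℕ) (hω : 1 ≤ ω) (M n E k : ℝ)
    (hM : 0 < M) (hE : E = 2 * M) (hMn : M < n) (hnE : n < E) (hk : 0 < k) :
    ((n - M) / n * (1 - ((E - n) / E) ^ ω)) * k / (n - M) < k / n ∧
    k / n < (1 - (n - M) / n * (1 - ((E - n) / E) ^ ω)) * k / M := by
  have hn : 0 < n := lt_trans hM hMn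
  have hnM : 0 < n - M := by linarith
  have hE0 : 0 < E := by linarith
  have ht0 : 0 < (E - n) / E := div_pos (by linarith) hE0
  have ht1 : (E - n) / E < 1 := by
    rw [div_lt_one hE0]; linarith
  have hp0 : 0 < ((E - n) / E) ^ ω := pow_pos ht0 ω
  have hp1 : ((E - n) / E) ^ ω < 1 := pow_lt_one₀ ht0.le ht1 (by omega)
  set p := ((E - n) / E) ^ ω with hp
  constructor
  · rw [div_lt_div_iff₀ hnM hn]
    have h1 : (n - M) / n * (1 - p) * k * n = (n - M) * (1 - p) * k := by
      field_simp
    rw [h1]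
    nlinarith [mul_pos (mul_pos hnM hp0) hk]
  · rw [div_lt_div_iff₀ hn hM]
    have hdiv : (n - M) / n * n = n - M := div_mul_cancel₀ _ hn.ne'
    have h2 : (1 - (n - M) / n * (1 - p)) * k * n = (M + (n - M) * p) * k := by
      linear_combination (-(1 - p) * k) * hdiv
    rw [h2]
    nlinarith [mul_pos (mul_pos hnM hp0) hk]
end

section
/- Let ω ≥ 1 be a natural number and let M, n, E, k be real numbers with 0 < M, E = 2M, M < n ≤ E and k > 0. With P = ((n − M)/n)·(1 − ((E − n)/E)^ω), K' = P·k/(n − M) and K = (1 − P)·k/M, the normalized expectation gap satisfies (K − K')/(k/n) = (1/2^ω)·(1 + (n − M)/M)·(1 − (n − M)/M)^ω. -/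
/-- The normalized expectation gap of BinomialHash: with
`P = ((n−M)/n)·(1−((E−n)/E)^ω)`, `K' = P·k/(n−M)` and `K = (1−P)·k/M`, one has
`(K − K')/(k/n) = (1/2^ω)·(1 + (n−M)/M)·(1 − (n−M)/M)^ω`. -/
theorem normalized_gap_formula (ω : ℕ) (hω : 1 ≤ ω) (M n E k : ℝ)
    (hM : 0 < M) (hE : E = 2 * M) (hMn : M < n) (hnE : n ≤ E) (hk : 0 < k) :
    ((1 - (n - M) / n * (1 - ((E - n) / E) ^ ω)) * k / M
        - ((n - M) / n * (1 - ((E - n) / E) ^ ω)) * k / (n - M)) / (k / n)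
      = (1 / 2 ^ ω) * (1 + (n - M) / M) * (1 - (n - M) / M) ^ ω := by
  have hn : 0 < n := hM.trans hMn
  have ht : 0 < n - M := sub_pos.2 hMn
  have hq : (E - n) / E = (1 - (n - M) / M) / 2 := by
    subst hE; field_simp; ring
  rw [hq, div_pow]
  field_simp
  ring
end

section
/- Let ω ≥ 1 be a natural number and let M, n, E, k be real numbers with 0 < M, E = 2M, M < n ≤ E and k > 0. With P = ((n − M)/n)·(1 − ((E − n)/E)^ω), K' = P·k/(n − M) and K = (1 − P)·k/M, the relative imbalance is strictly bounded by 2^(−ω): (K − K')·n/k < 1/2^ω. -/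
lemma aux_xpow (ω : ℕ) (hω : 1 ≤ ω) (x : ℝ) (hx1 : 1 < x) (hx2 : x ≤ 2) :
    x * (2 - x) ^ ω < 1 := by
  induction ω, hω using Nat.le_induction with
  | base =>
    have h : x * (2 - x) ^ 1 = 1 - (x - 1) ^ 2 := by ring
    nlinarith [mul_pos (sub_pos.mpr hx1) (sub_pos.mpr hx1)]
  | succ n hn ih =>
    have h0 : (0:ℝ) ≤ 2 - x := by linarith
    have h1 : 2 - x ≤ 1 := by linarith
    have hpos : 0 ≤ x * (2 - x) ^ n := by positivity
    calc x * (2 - x) ^ (n + 1) = (2 - x) * (x * (2 - x) ^ n) := by ring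
      _ ≤ 1 * (x * (2 - x) ^ n) := by apply mul_le_mul_of_nonneg_right h1 hpos
      _ = x * (2 - x) ^ n := by ring
      _ < 1 := ih

/-- The relative imbalance of BinomialHash is strictly bounded by `2^(−ω)`:
with `P = ((n−M)/n)·(1−((E−n)/E)^ω)`, `K' = P·k/(n−M)` and `K = (1−P)·k/M`,
one has `(K − K')·n/k < 1/2^ω`. -/
theorem relative_imbalance_bound (ω : ℕ) (hω : 1 ≤ ω) (M n E k : ℝ)
    (hM : 0 < M) (hE : E = 2 * M) (hMn : M < n) (hnE : n ≤ E) (hk : 0 < k) :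
    ((1 - (n - M) / n * (1 - ((E - n) / E) ^ ω)) * k / M
        - ((n - M) / n * (1 - ((E - n) / E) ^ ω)) * k / (n - M)) * n / k
      < 1 / 2 ^ ω := by
  subst hE
  have hn : 0 < n := lt_trans hM hMn
  have hnM : 0 < n - M := by linarith
  set x : ℝ := n / M with hx
  have hx1 : 1 < x := (one_lt_div hM).mpr hMn
  have hx2 : x ≤ 2 := by rw [hx, div_le_iff₀ hM]; linarith
  have ht : (2 * M - n) / (2 * M) = (2 - x) / 2 := by
    rw [hx]; field_simp
    try ring
  have heq : ((1 - (n - M) / n * (1 - ((2 * M - n) / (2 * M)) ^ ω)) * k / M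
        - ((n - M) / n * (1 - ((2 * M - n) / (2 * M)) ^ ω)) * k / (n - M)) * n / k
      = x * (2 - x) ^ ω / 2 ^ ω := by
    rw [ht, div_pow, hx]
    field_simp
    ring
  rw [heq, div_lt_div_iff₀ (by positivity) (by positivity), one_mul]
  nlinarith [aux_xpow ω hω x hx1 hx2, pow_pos (show (0:ℝ) < 2 by norm_num) ω]
end

section
/- Let ω ≥ 1 be a natural number and let M > 0 and q > 0 be real numbers. Define σ(n) = q·√(((n − M)/M)·((2M − n)/(2M))^ω) for n ∈ [M, 2M]. Then for all n ∈ [M, 2M], σ(n) ≤ q·√((1/(1 + ω))·(ω/(2·(1 + ω)))^ω), and this maximum is attained at n = ((2 + ω)/(1 + ω))·M. -/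
/-! With `t = (n - M) / M ∈ [0, 1]` the radicand is `t * ((1 - t) / 2) ^ ω`. AM–GM for the
`ω + 1` numbers `ω t, 1 - t, …, 1 - t`, whose sum `ω` does not depend on `t`, gives
`ω t (1 - t) ^ ω ≤ (ω / (1 + ω)) ^ (1 + ω)`, with equality at `ω t = 1 - t`, i.e.
`t = 1 / (1 + ω)`, which is `n = (2 + ω) / (1 + ω) · M`. -/

namespace Real

theorem mul_pow_le_add_mul_div_pow {x y : ℝ} (hx : 0 ≤ x) (hy : 0 ≤ y) (n : ℕ) :
    x * y ^ n ≤ ((x + n * y) / (n + 1)) ^ (n + 1) := by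
  have hc : (0 : ℝ) < n + 1 := by positivity
  have amgm := geom_mean_le_arith_mean2_weighted (w₁ := 1 / (n + 1)) (w₂ := n / (n + 1))
    (by positivity) (by positivity) hx hy (by field_simp; ring)
  have key := rpow_le_rpow (by positivity) amgm hc.le
  rw [mul_rpow (by positivity) (by positivity), ← rpow_mul hx, ← rpow_mul hy,
    one_div_mul_cancel hc.ne', div_mul_cancel₀ _ hc.ne', rpow_one, rpow_natCast] at key
  calc x * y ^ n ≤ (1 / (n + 1) * x + n / (n + 1) * y) ^ ((n : ℝ) + 1) := key
    _ = ((x + n * y) / (n + 1)) ^ (n + 1) := by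
      rw [← Nat.cast_add_one, rpow_natCast]; congr 1; field_simp

end Real

theorem mul_one_sub_pow_le {ω : ℕ} (hω : 0 < ω) {t : ℝ} (ht₀ : 0 ≤ t) (ht₁ : t ≤ 1) :
    t * (1 - t) ^ ω ≤ 1 / (1 + ω) * (ω / (1 + ω)) ^ ω := by
  have hω' : (0 : ℝ) < ω := by exact_mod_cast hω
  have amgm := Real.mul_pow_le_add_mul_div_pow (by positivity : 0 ≤ ω * t) (sub_nonneg.2 ht₁) ω
  have hsum : (ω * t + ω * (1 - t)) / (ω + 1) = ω / (1 + ω) := by ring_nf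
  rw [hsum, pow_succ, mul_assoc] at amgm
  rw [← mul_le_mul_iff_right₀ hω']
  calc (ω : ℝ) * (t * (1 - t) ^ ω) ≤ (ω / (1 + ω)) ^ ω * (ω / (1 + ω)) := by linarith
    _ = ω * (1 / (1 + ω) * (ω / (1 + ω)) ^ ω) := by ring

theorem mul_one_sub_div_two_pow_le {ω : ℕ} (hω : 0 < ω) {t : ℝ} (ht₀ : 0 ≤ t) (ht₁ : t ≤ 1) :
    t * ((1 - t) / 2) ^ ω ≤ 1 / (1 + ω) * (ω / (2 * (1 + ω))) ^ ω := by
  calc t * ((1 - t) / 2) ^ ω = t * (1 - t) ^ ω / 2 ^ ω := by rw [div_pow, mul_div_assoc]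
    _ ≤ 1 / (1 + ω) * (ω / (1 + ω)) ^ ω / 2 ^ ω := by
      gcongr ?_ / _; exact mul_one_sub_pow_le hω ht₀ ht₁
    _ = 1 / (1 + ω) * (ω / (2 * (1 + ω))) ^ ω := by rw [div_pow, div_pow, mul_pow]; ring

/-- The standard deviation `σ(n) = q·√(((n−M)/M)·((2M−n)/(2M))^ω)` of BinomialHash,
for `n ∈ [M, 2M]`, is bounded by `q·√((1/(1+ω))·(ω/(2(1+ω)))^ω)`, and this maximum
is attained at `n = ((2+ω)/(1+ω))·M`. -/
theorem sigma_max (ω : ℕ) (hω : 1 ≤ ω) (M q : ℝ) (hM : 0 < M) (hq : 0 < q) :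
    (∀ n ∈ Set.Icc M (2 * M),
      q * Real.sqrt ((n - M) / M * ((2 * M - n) / (2 * M)) ^ ω)
        ≤ q * Real.sqrt (1 / (1 + ω) * ((ω : ℝ) / (2 * (1 + ω))) ^ ω)) ∧
    q * Real.sqrt (((2 + ω) / (1 + ω) * M - M) / M
          * ((2 * M - (2 + ω) / (1 + ω) * M) / (2 * M)) ^ ω)
      = q * Real.sqrt (1 / (1 + ω) * ((ω : ℝ) / (2 * (1 + ω))) ^ ω) := by
  refine ⟨fun n ⟨hn₁, hn₂⟩ => ?_, ?_⟩
  · have ht₀ : 0 ≤ (n - M) / M := div_nonneg (by linarith) hM.le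
    have ht₁ : (n - M) / M ≤ 1 := (div_le_one hM).2 (by linarith)
    have hhalf : (2 * M - n) / (2 * M) = (1 - (n - M) / M) / 2 := by field_simp; ring
    rw [hhalf]
    exact mul_le_mul_of_nonneg_left
      (Real.sqrt_le_sqrt (mul_one_sub_div_two_pow_le hω ht₀ ht₁)) hq.le
  · have h₁ : ((2 + ω) / (1 + ω) * M - M) / M = 1 / (1 + (ω : ℝ)) := by field_simp; ring
    have h₂ : (2 * M - (2 + ω) / (1 + ω) * M) / (2 * M) = (ω : ℝ) / (2 * (1 + ω)) := by
      field_simp; ring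
    rw [h₁, h₂]
end

section
/- The maximal standard deviation σ_max(ω) = q·√((1/(1 + ω))·(ω/(2·(1 + ω)))^ω) is strictly decreasing in ω: for every natural number ω ≥ 1 and every real q > 0, q·√((1/(2 + ω))·((ω + 1)/(2·(2 + ω)))^(ω+1)) < q·√((1/(1 + ω))·(ω/(2·(1 + ω)))^ω). -/
/-- The maximal standard deviation `σ_max(ω) = q·√((1/(1+ω))·(ω/(2(1+ω)))^ω)` of
BinomialHash is strictly decreasing in `ω`. -/
theorem sigma_max_strict_anti (ω : ℕ) (hω : 1 ≤ ω) (q : ℝ) (hq : 0 < q) :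
    q * Real.sqrt (1 / (2 + ω) * (((ω : ℝ) + 1) / (2 * (2 + ω))) ^ (ω + 1))
      < q * Real.sqrt (1 / (1 + ω) * ((ω : ℝ) / (2 * (1 + ω))) ^ ω) := by
  obtain ⟨m, rfl⟩ : ∃ m, ω = m + 1 := ⟨ω - 1, (Nat.succ_pred_eq_of_pos hω).symm⟩
  set x : ℝ := ((m + 1 : ℕ) : ℝ) with hxdef
  have hx : (1:ℝ) ≤ x := by
    rw [hxdef]; exact_mod_cast hω
  have h1 : (0:ℝ) < 1 + x := by linarith
  have h2 : (0:ℝ) < 2 + x := by linarith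
  set A : ℝ := (x + 1)^2 with hAdef
  have hA0 : (0:ℝ) < A := by positivity
  have hA1 : (1:ℝ) < A := by nlinarith
  have h1A : 1 / A ≤ 1 := by rw [div_le_one hA0]; linarith
  have h1A0 : 0 < 1 / A := by positivity
  have hb : 1 + ((m + 1 : ℕ) : ℝ) * (-(1/A)) ≤ (1 + -(1/A)) ^ (m + 1) :=
    one_add_mul_le_pow (by linarith) (m + 1)
  have hAm : (0:ℝ) < A ^ (m + 1) := pow_pos hA0 _
  have hAm0 : (0:ℝ) < A ^ m := pow_pos hA0 m
  have hmul := mul_le_mul_of_nonneg_right hb (le_of_lt hAm)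
  have hr : (1 + -(1/A)) ^ (m + 1) * A ^ (m + 1) = (A - 1) ^ (m + 1) := by
    rw [← mul_pow]; congr 1; field_simp; ring
  have hl : (1 + ((m + 1 : ℕ) : ℝ) * (-(1/A))) * A ^ (m + 1)
      = A ^ (m + 1) - x * A ^ m := by
    rw [← hxdef, pow_succ]; field_simp; ring
  rw [hr, hl] at hmul
  have hpoly : A ^ 2 < 2 * (A - x) * (x + 2) ^ 2 := by
    rw [hAdef]; nlinarith [sq_nonneg x, sq_nonneg (x + 1), sq_nonneg (x*x)]
  have key : A ^ (m + 2) < 2 * x ^ (m + 1) * (x + 2) ^ (m + 3) := by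
    have e1 : 2 * x ^ (m + 1) * (x + 2) ^ (m + 3)
        = 2 * (A - 1) ^ (m + 1) * (x + 2) ^ 2 := by
      have hA1' : A - 1 = x * (x + 2) := by rw [hAdef]; ring
      rw [hA1', mul_pow]; ring
    rw [e1]
    calc A ^ (m + 2) = A ^ m * A ^ 2 := by ring
      _ < A ^ m * (2 * (A - x) * (x + 2) ^ 2) :=
          mul_lt_mul_of_pos_left hpoly hAm0
      _ = 2 * (A ^ (m + 1) - x * A ^ m) * (x + 2) ^ 2 := by ring
      _ ≤ 2 * (A - 1) ^ (m + 1) * (x + 2) ^ 2 := by nlinarith [sq_nonneg (x + 2)]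
  apply mul_lt_mul_of_pos_left _ hq
  apply Real.sqrt_lt_sqrt
  · positivity
  · have key2 := mul_lt_mul_of_pos_left key (pow_pos (by norm_num : (0:ℝ) < 2) (m + 1))
    have hApow : A ^ (m + 2) = (x + 1) ^ (m + 2) * (x + 1) ^ (m + 2) := by
      rw [hAdef, ← pow_mul, ← pow_add]
      congr 1
      ring
    rw [div_pow, div_pow, one_div_mul_eq_div, one_div_mul_eq_div, div_div, div_div,
      div_lt_div_iff₀ (by positivity) (by positivity)]
    calc (x + 1) ^ (m + 1 + 1) * ((2 * (1 + x)) ^ (m + 1) * (1 + x))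
        = 2 ^ (m + 1) * A ^ (m + 2) := by rw [hApow, mul_pow]; ring
      _ < 2 ^ (m + 1) * (2 * x ^ (m + 1) * (x + 2) ^ (m + 3)) := key2
      _ = x ^ (m + 1) * ((2 * (2 + x)) ^ (m + 1 + 1) * (2 + x)) := by rw [mul_pow]; ring
end
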